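/- Let Q and Q₀ be J-normal projections on a Krein space (H,J) with ‖Q − Q₀‖ < 1/(2(1 + ‖Q₀‖)). Set P = Q(I − Q^#) and P₀ = Q₀(I − Q₀^#). Then ‖P − P₀‖ ≤ 2(1 + ‖Q₀‖)‖Q − Q₀‖ < 1, and consequently the orthogonal projections onto the isotropic parts R(Q)° = R(P) and R(Q₀)° = R(P₀) satisfy ‖P_{R(Q)°} − P_{R(Q₀)°}‖ < 1; in particular dim R(Q)° = dim R(Q₀)°. -/

import Mathlib

open ContinuousLinearMap

variable {H : Type*} [NormedAddCommGroup H] [InnerProductSpace ℂ H] [CompleteSpace H]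

/-- The `J`-adjoint `T^# = J T* J`. -/
noncomputable def sharp (J T : H →L[ℂ] H) : H →L[ℂ] H :=
  J ∘L (ContinuousLinearMap.adjoint T) ∘L J

/-!
`P - P₀ = (Q - Q₀)(1 - Q^#) - Q₀(Q^# - Q₀^#)`, and `‖T^#‖ = ‖T‖` because `J` is unitary; this gives
the first bound. If `R, R₀` are the orthogonal projections onto the ranges of the idempotents
`P, P₀`, then `(1 - R₀) R = (1 - R₀)(P - P₀) R`, and `(R - R₀) x` splits into two orthogonal pieces
bounded by `‖P - P₀‖ ‖R x‖` and `‖P - P₀‖ ‖(1 - R) x‖`, so `‖R - R₀‖ ≤ ‖P - P₀‖ < 1`. Finally, if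
`A` is idempotent and `‖A - B‖ < 1`, then `B` is injective on the range of `A`.
-/

open scoped InnerProductSpace

section NormedRing

variable {A : Type*} [NormedRing A]

theorem norm_mul_one_sub_sub_mul_one_sub_le (p p₀ s s₀ : A) :
    ‖p * (1 - s) - p₀ * (1 - s₀)‖ ≤ ‖p - p₀‖ * (1 + ‖s‖) + ‖p₀‖ * ‖s - s₀‖ := by
  have h : p * (1 - s) - p₀ * (1 - s₀) = (p - p₀) - (p - p₀) * s - p₀ * (s - s₀) := by
    noncomm_ring
  calc ‖p * (1 - s) - p₀ * (1 - s₀)‖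
      ≤ ‖p - p₀‖ + ‖(p - p₀) * s‖ + ‖p₀ * (s - s₀)‖ := by
        rw [h]; exact (norm_sub_le _ _).trans (by gcongr; exact norm_sub_le _ _)
    _ ≤ ‖p - p₀‖ + ‖p - p₀‖ * ‖s‖ + ‖p₀‖ * ‖s - s₀‖ := by
        gcongr <;> exact norm_mul_le _ _
    _ = ‖p - p₀‖ * (1 + ‖s‖) + ‖p₀‖ * ‖s - s₀‖ := by ring

variable [StarRing A] [CStarRing A]

theorem IsStarProjection.norm_one_sub_mul_le {p p₀ r r₀ : A} (hr : IsStarProjection r)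
    (hr₀ : IsStarProjection r₀) (hpr : p * r = r) (hrp₀ : r₀ * p₀ = p₀) :
    ‖(1 - r₀) * r‖ ≤ ‖p - p₀‖ := by
  have h : (1 - r₀) * (p - p₀) * r = (1 - r₀) * r := by
    have hp₀ : (1 - r₀) * p₀ = 0 := by rw [sub_mul, one_mul, hrp₀, sub_self]
    rw [mul_sub, sub_mul, mul_assoc, hpr, hp₀, zero_mul, sub_zero]
  calc ‖(1 - r₀) * r‖ = ‖(1 - r₀) * (p - p₀) * r‖ := by rw [h]
    _ ≤ ‖1 - r₀‖ * ‖p - p₀‖ * ‖r‖ := norm_mul₃_le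
    _ ≤ 1 * ‖p - p₀‖ * 1 := by
        gcongr
        exacts [hr₀.one_sub.norm_le, hr.norm_le]
    _ = ‖p - p₀‖ := by ring

end NormedRing

theorem ContinuousLinearMap.IsIdempotentElem.mul_eq_right_of_range_le {R M : Type*} [Ring R]
    [TopologicalSpace M] [AddCommGroup M] [Module R M] {p q : M →L[R] M} (hp : IsIdempotentElem p)
    (h : LinearMap.range (q : M →ₗ[R] M) ≤ LinearMap.range (p : M →ₗ[R] M)) : p * q = q :=
  coe_inj.mp ((LinearMap.IsIdempotentElem.comp_eq_right_iff hp.toLinearMap _).mpr h)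

section InnerProductSpace

variable {𝕜 E : Type*} [RCLike 𝕜] [NormedAddCommGroup E] [InnerProductSpace 𝕜 E] [CompleteSpace E]

theorem IsStarProjection.inner_apply_one_sub_apply {R : E →L[𝕜] E} (hR : IsStarProjection R)
    (x y : E) : ⟪R x, (1 - R) y⟫_𝕜 = 0 := by
  rw [← adjoint_inner_right, ← star_eq_adjoint, hR.isSelfAdjoint.star_eq, ← mul_apply_eq_comp,
    hR.mul_one_sub_self, zero_apply, inner_zero_right]

theorem IsStarProjection.norm_sq_add_norm_sq {R : E →L[𝕜] E} (hR : IsStarProjection R) (x : E) :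
    ‖R x‖ ^ 2 + ‖(1 - R) x‖ ^ 2 = ‖x‖ ^ 2 := by
  have h := norm_add_sq_eq_norm_sq_add_norm_sq_of_inner_eq_zero _ _
    (hR.inner_apply_one_sub_apply x x)
  rw [sub_apply, one_apply_eq_self, add_sub_cancel] at h
  rw [sub_apply, one_apply_eq_self, sq, sq, sq, h]

theorem IsStarProjection.norm_sub_le {R R₀ : E →L[𝕜] E} (hR : IsStarProjection R)
    (hR₀ : IsStarProjection R₀) {c : ℝ} (h : ‖(1 - R₀) * R‖ ≤ c) (h₀ : ‖R₀ * (1 - R)‖ ≤ c) :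
    ‖R - R₀‖ ≤ c := by
  have hc : 0 ≤ c := (norm_nonneg _).trans h
  refine opNorm_le_bound _ hc fun x => ?_
  set a := (1 - R₀) (R x)
  set b := R₀ ((1 - R) x)
  have hab : (R - R₀) x = a - b := by
    simp only [a, b, sub_apply, one_apply_eq_self, map_sub]
    abel
  have ha : ‖a‖ ≤ c * ‖R x‖ := by
    calc ‖a‖ = ‖((1 - R₀) * R) (R x)‖ := by
          rw [mul_apply_eq_comp, ← mul_apply_eq_comp R, hR.isIdempotentElem.eq]
      _ ≤ c * ‖R x‖ := le_of_opNorm_le _ h _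
  have hb : ‖b‖ ≤ c * ‖(1 - R) x‖ := by
    calc ‖b‖ = ‖(R₀ * (1 - R)) ((1 - R) x)‖ := by
          rw [mul_apply_eq_comp, ← mul_apply_eq_comp (1 - R), hR.one_sub.isIdempotentElem.eq]
      _ ≤ c * ‖(1 - R) x‖ := le_of_opNorm_le _ h₀ _
  have hpyth : ‖a - b‖ ^ 2 = ‖a‖ ^ 2 + ‖b‖ ^ 2 := by
    rw [norm_sub_sq (𝕜 := 𝕜), ← inner_conj_symm, hR₀.inner_apply_one_sub_apply, map_zero,
      map_zero, mul_zero, sub_zero]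
  rw [← pow_le_pow_iff_left₀ (norm_nonneg _) (by positivity) two_ne_zero, hab, hpyth, mul_pow,
    ← hR.norm_sq_add_norm_sq x]
  nlinarith [pow_le_pow_left₀ (norm_nonneg _) ha 2, pow_le_pow_left₀ (norm_nonneg _) hb 2]

theorem IsStarProjection.norm_sub_le_of_range_eq {P P₀ R R₀ : E →L[𝕜] E}
    (hP : IsIdempotentElem P) (hP₀ : IsIdempotentElem P₀) (hR : IsStarProjection R)
    (hR₀ : IsStarProjection R₀)
    (hRr : LinearMap.range (R : E →ₗ[𝕜] E) = LinearMap.range (P : E →ₗ[𝕜] E))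
    (hR₀r : LinearMap.range (R₀ : E →ₗ[𝕜] E) = LinearMap.range (P₀ : E →ₗ[𝕜] E)) :
    ‖R - R₀‖ ≤ ‖P - P₀‖ := by
  have hPR : P * R = R := hP.mul_eq_right_of_range_le hRr.le
  have hP₀R₀ : P₀ * R₀ = R₀ := hP₀.mul_eq_right_of_range_le hR₀r.le
  have hRP : R * P = P := hR.isIdempotentElem.mul_eq_right_of_range_le hRr.ge
  have hR₀P₀ : R₀ * P₀ = P₀ := hR₀.isIdempotentElem.mul_eq_right_of_range_le hR₀r.ge
  refine hR.norm_sub_le hR₀ (hR.norm_one_sub_mul_le hR₀ hPR hR₀P₀) ?_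
  calc ‖R₀ * (1 - R)‖ = ‖(1 - R) * R₀‖ := by
        rw [← norm_star, star_mul, hR.one_sub.isSelfAdjoint.star_eq, hR₀.isSelfAdjoint.star_eq]
    _ ≤ ‖P₀ - P‖ := hR₀.norm_one_sub_mul_le hR hP₀R₀ hRP
    _ = ‖P - P₀‖ := norm_sub_rev _ _

end InnerProductSpace

section NormedSpace

variable {𝕜 E : Type*} [NontriviallyNormedField 𝕜] [NormedAddCommGroup E] [NormedSpace 𝕜 E]

theorem eq_zero_of_mem_range_of_norm_sub_lt_one {A B : E →L[𝕜] E} (hA : IsIdempotentElem A)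
    (h : ‖A - B‖ < 1) {x : E} (hx : x ∈ LinearMap.range (A : E →ₗ[𝕜] E)) (hBx : B x = 0) :
    x = 0 := by
  have hAx : A x = x := (LinearMap.IsIdempotentElem.mem_range_iff hA.toLinearMap).mp hx
  have hle : ‖x‖ ≤ ‖A - B‖ * ‖x‖ := by
    simpa only [sub_apply, hAx, hBx, sub_zero] using (A - B).le_opNorm x
  exact norm_eq_zero.mp (by nlinarith [norm_nonneg x])

theorem rank_range_le_of_norm_sub_lt_one {A B : E →L[𝕜] E} (hA : IsIdempotentElem A)
    (h : ‖A - B‖ < 1) :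
    Module.rank 𝕜 (LinearMap.range (A : E →ₗ[𝕜] E))
      ≤ Module.rank 𝕜 (LinearMap.range (B : E →ₗ[𝕜] E)) := by
  let f := ((B : E →ₗ[𝕜] E).domRestrict (LinearMap.range (A : E →ₗ[𝕜] E))).codRestrict
    (LinearMap.range (B : E →ₗ[𝕜] E)) fun x => LinearMap.mem_range_self _ _
  refine LinearMap.rank_le_of_injective f ((injective_iff_map_eq_zero f).mpr fun x hx => ?_)
  exact Subtype.ext (eq_zero_of_mem_range_of_norm_sub_lt_one hA h x.2 congr(($hx).1))

theorem rank_range_eq_of_norm_sub_lt_one {A B : E →L[𝕜] E} (hA : IsIdempotentElem A)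
    (hB : IsIdempotentElem B) (h : ‖A - B‖ < 1) :
    Module.rank 𝕜 (LinearMap.range (A : E →ₗ[𝕜] E))
      = Module.rank 𝕜 (LinearMap.range (B : E →ₗ[𝕜] E)) :=
  (rank_range_le_of_norm_sub_lt_one hA h).antisymm
    (rank_range_le_of_norm_sub_lt_one hB (by rwa [norm_sub_rev]))

end NormedSpace

section Sharp

variable {J : H →L[ℂ] H}

theorem sharp_eq_mul (T : H →L[ℂ] H) : sharp J T = J * star T * J := by
  rw [mul_assoc, star_eq_adjoint]
  rfl

theorem sharp_sub (S T : H →L[ℂ] H) : sharp J (S - T) = sharp J S - sharp J T := by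
  simp only [sharp_eq_mul, star_sub, mul_sub, sub_mul]

theorem norm_sharp (hJsa : adjoint J = J) (hJ2 : J ∘L J = 1) (T : H →L[ℂ] H) :
    ‖sharp J T‖ = ‖T‖ := by
  have hJ : J ∈ unitary (H →L[ℂ] H) := by
    rw [Unitary.mem_iff, star_eq_adjoint, hJsa]
    exact ⟨hJ2, hJ2⟩
  rw [sharp_eq_mul, CStarRing.norm_mul_mem_unitary _ hJ, CStarRing.norm_mem_unitary_mul _ hJ,
    norm_star]

theorem isIdempotentElem_sharp (hJ2 : J ∘L J = 1) {T : H →L[ℂ] H} (hT : IsIdempotentElem T) :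
    IsIdempotentElem (sharp J T) := by
  have hJJ : J * J = 1 := hJ2
  calc sharp J T * sharp J T = J * star T * (J * J) * star T * J := by
        simp only [sharp_eq_mul, mul_assoc]
    _ = sharp J T := by rw [hJJ, mul_one, mul_assoc J, hT.star.eq, sharp_eq_mul]

theorem isIdempotentElem_mul_one_sub_sharp (hJ2 : J ∘L J = 1) {Q : H →L[ℂ] H}
    (hQ : IsIdempotentElem Q) (hQn : Commute Q (sharp J Q)) :
    IsIdempotentElem (Q * (1 - sharp J Q)) :=
  hQ.mul_of_commute ((Commute.one_right Q).sub_right hQn) (isIdempotentElem_sharp hJ2 hQ).one_sub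

theorem norm_mul_one_sub_sharp_sub_le (hJsa : adjoint J = J) (hJ2 : J ∘L J = 1)
    {Q Q₀ : H →L[ℂ] H} (h : ‖Q - Q₀‖ ≤ 1) :
    ‖Q * (1 - sharp J Q) - Q₀ * (1 - sharp J Q₀)‖ ≤ 2 * (1 + ‖Q₀‖) * ‖Q - Q₀‖ := by
  have hQ : ‖Q‖ ≤ ‖Q₀‖ + 1 := (norm_le_norm_add_norm_sub' Q Q₀).trans (by linarith)
  calc ‖Q * (1 - sharp J Q) - Q₀ * (1 - sharp J Q₀)‖
      ≤ ‖Q - Q₀‖ * (1 + ‖sharp J Q‖) + ‖Q₀‖ * ‖sharp J Q - sharp J Q₀‖ :=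
        norm_mul_one_sub_sub_mul_one_sub_le _ _ _ _
    _ = ‖Q - Q₀‖ * (1 + ‖Q‖) + ‖Q₀‖ * ‖Q - Q₀‖ := by
        rw [← sharp_sub, norm_sharp hJsa hJ2, norm_sharp hJsa hJ2]
    _ ≤ 2 * (1 + ‖Q₀‖) * ‖Q - Q₀‖ := by nlinarith [norm_nonneg (Q - Q₀)]

end Sharp

/-- If `Q, Q₀` are `J`-normal projections with `‖Q − Q₀‖ < 1/(2(1+‖Q₀‖))`, then for
`P = Q(I − Q^#)`, `P₀ = Q₀(I − Q₀^#)`: `‖P − P₀‖ ≤ 2(1+‖Q₀‖)‖Q − Q₀‖ < 1`, the orthogonal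
projections onto the isotropic parts `R(P)`, `R(P₀)` are at distance `< 1`, and the isotropic
parts have the same dimension. -/
theorem stmt9 (J Q Q₀ : H →L[ℂ] H)
    (hJsa : ContinuousLinearMap.adjoint J = J) (hJ2 : J ∘L J = 1)
    (hQ : Q ∘L Q = Q) (hQn : Q ∘L sharp J Q = sharp J Q ∘L Q)
    (hQ₀ : Q₀ ∘L Q₀ = Q₀) (hQ₀n : Q₀ ∘L sharp J Q₀ = sharp J Q₀ ∘L Q₀)
    (hclose : ‖Q - Q₀‖ < 1 / (2 * (1 + ‖Q₀‖)))
    (P P₀ : H →L[ℂ] H)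
    (hP : P = Q ∘L (1 - sharp J Q)) (hP₀ : P₀ = Q₀ ∘L (1 - sharp J Q₀))
    (R R₀ : H →L[ℂ] H)
    (hR : R ∘L R = R) (hRsa : IsSelfAdjoint R) (hRr : LinearMap.range (R : H →ₗ[ℂ] H) = LinearMap.range (P : H →ₗ[ℂ] H))
    (hR₀ : R₀ ∘L R₀ = R₀) (hR₀sa : IsSelfAdjoint R₀)
    (hR₀r : LinearMap.range (R₀ : H →ₗ[ℂ] H) = LinearMap.range (P₀ : H →ₗ[ℂ] H)) :
    ‖P - P₀‖ ≤ 2 * (1 + ‖Q₀‖) * ‖Q - Q₀‖ ∧ 2 * (1 + ‖Q₀‖) * ‖Q - Q₀‖ < 1 ∧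
    ‖R - R₀‖ < 1 ∧
    Module.rank ℂ (LinearMap.range (P : H →ₗ[ℂ] H)) = Module.rank ℂ (LinearMap.range (P₀ : H →ₗ[ℂ] H)) := by
  have hsmall : 2 * (1 + ‖Q₀‖) * ‖Q - Q₀‖ < 1 := by
    rwa [lt_div_iff₀' (by positivity)] at hclose
  have hPP₀ : ‖P - P₀‖ ≤ 2 * (1 + ‖Q₀‖) * ‖Q - Q₀‖ := by
    rw [hP, hP₀]
    refine norm_mul_one_sub_sharp_sub_le hJsa hJ2 ?_
    nlinarith [norm_nonneg Q₀, norm_nonneg (Q - Q₀)]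
  have hPidem : IsIdempotentElem P := by
    rw [hP]; exact isIdempotentElem_mul_one_sub_sharp hJ2 hQ hQn
  have hP₀idem : IsIdempotentElem P₀ := by
    rw [hP₀]; exact isIdempotentElem_mul_one_sub_sharp hJ2 hQ₀ hQ₀n
  have hRR₀ : ‖R - R₀‖ < 1 :=
    (IsStarProjection.norm_sub_le_of_range_eq hPidem hP₀idem ⟨hR, hRsa⟩ ⟨hR₀, hR₀sa⟩ hRr hR₀r
      |>.trans hPP₀).trans_lt hsmall
  refine ⟨hPP₀, hsmall, hRR₀, ?_⟩
  rw [← hRr, ← hR₀r]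
  exact rank_range_eq_of_norm_sub_lt_one hR hR₀ hRR₀
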